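/- Fix n ≥ 1 and let the additive group ℤ act on S^n × ℝ by k • (p, t) = (((−1)^k) • p, t + k·π), where ((−1)^k) • p equals p when k is even and −p when k is odd. This is a continuous action by homeomorphisms, and the quotient space (S^n × ℝ) / ℤ, with the quotient topology, is a compact Hausdorff topological space. -/

import Mathlib

/-! The time coordinate is a continuous map to `ℝ` along which the generator of `ℤ` acts by
translation by `π`, so the action is properly discontinuous and the quotient of the locally compact
Hausdorff cylinder is Hausdorff. It is compact because the compact slab `S^n × [0, π]` meets every
orbit. -/

/-- The action of `k : ℤ` on the Einstein cylinder `S^n × ℝ`, sending `(p, t)` to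
`((-1)^k • p, t + k·π)`. -/
noncomputable def einsteinShift (n : ℕ) (k : ℤ)
    (x : Metric.sphere (0 : EuclideanSpace ℝ (Fin (n + 1))) 1 × ℝ) :
    Metric.sphere (0 : EuclideanSpace ℝ (Fin (n + 1))) 1 × ℝ :=
  (⟨((-1 : ℝ) ^ k) • (x.1 : EuclideanSpace ℝ (Fin (n + 1))), by
      have hx : ‖(x.1 : EuclideanSpace ℝ (Fin (n + 1)))‖ = 1 := by
        exact mem_sphere_zero_iff_norm.mp x.1.2
      have habs : |(-1 : ℝ) ^ k| = 1 := by
        rcases Int.even_or_odd k with h | h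
        · rw [h.neg_one_zpow, abs_one]
        · rw [h.neg_one_zpow, abs_neg, abs_one]
      simp only [Metric.mem_sphere, dist_zero_right, norm_smul, hx, mul_one,
        Real.norm_eq_abs, habs]⟩,
    x.2 + k * Real.pi)

open Filter Set

theorem properlyDiscontinuousVAdd_int_of_map_vadd {X : Type*} [TopologicalSpace X] [VAdd ℤ X]
    {h : X → ℝ} (hh : Continuous h) {c : ℝ} (hc : c ≠ 0)
    (h_vadd : ∀ (k : ℤ) (x : X), h (k +ᵥ x) = h x + k * c) :
    ProperlyDiscontinuousVAdd ℤ X where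
  finite_disjoint_inter_image {K L} hK hL := by
    have hcofinite : Tendsto (fun k : ℤ => (k : ℝ) * c) cofinite (cocompact ℝ) :=
      (tendsto_cocompact_mul_right₀ hc).comp Int.tendsto_coe_cofinite
    have hdiff : IsCompact ((fun p : X × X => h p.1 - h p.2) '' (L ×ˢ K)) :=
      (hL.prod hK).image (by fun_prop)
    refine (tendsto_cofinite_cocompact_iff.mp hcofinite _ hdiff).subset ?_
    rintro k ⟨-, ⟨x, hxK, rfl⟩, hxL⟩
    exact ⟨(k +ᵥ x, x), ⟨hxL, hxK⟩, by simp [h_vadd]⟩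

theorem Quot.compactSpace_of_isCompact {X : Type*} [TopologicalSpace X] {r : X → X → Prop}
    {K : Set X} (hK : IsCompact K) (hK_meets : ∀ x, ∃ y ∈ K, Quot.mk r y = Quot.mk r x) :
    CompactSpace (Quot r) where
  isCompact_univ := by
    convert hK.image continuous_quot_mk
    refine (eq_univ_of_forall fun q => ?_).symm
    obtain ⟨x, rfl⟩ := Quot.exists_rep q
    exact hK_meets x

abbrev EinsteinCylinder (n : ℕ) := Metric.sphere (0 : EuclideanSpace ℝ (Fin (n + 1))) 1 × ℝ

section EinsteinShift

variable {n : ℕ}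

theorem einsteinShift_zero (x : EinsteinCylinder n) : einsteinShift n 0 x = x := by
  ext <;> simp [einsteinShift]

theorem einsteinShift_add (k l : ℤ) (x : EinsteinCylinder n) :
    einsteinShift n (k + l) x = einsteinShift n k (einsteinShift n l x) := by
  ext
  · simp [einsteinShift, smul_smul, zpow_add₀]
  · simp [einsteinShift]; ring

theorem continuous_einsteinShift (k : ℤ) : Continuous (einsteinShift n k) := by
  unfold einsteinShift; fun_prop

noncomputable instance : AddAction ℤ (EinsteinCylinder n) where
  vadd := einsteinShift n
  zero_vadd := einsteinShift_zero
  add_vadd := einsteinShift_add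

instance : ContinuousConstVAdd ℤ (EinsteinCylinder n) :=
  ⟨continuous_einsteinShift⟩

instance : ProperlyDiscontinuousVAdd ℤ (EinsteinCylinder n) :=
  properlyDiscontinuousVAdd_int_of_map_vadd continuous_snd Real.pi_ne_zero fun _ _ => rfl

instance : CompactSpace (Quotient (AddAction.orbitRel ℤ (EinsteinCylinder n))) := by
  refine Quot.compactSpace_of_isCompact
    (isCompact_univ.prod (isCompact_Icc (a := 0) (b := Real.pi))) fun x => ?_
  obtain ⟨k, hk, -⟩ := existsUnique_add_zsmul_mem_Ico Real.pi_pos x.2 0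
  rw [zero_add, zsmul_eq_mul] at hk
  exact ⟨k +ᵥ x, ⟨mem_univ _, Ico_subset_Icc_self hk⟩, Quot.sound ⟨k, rfl⟩⟩

theorem einsteinShift_rel_eq_orbitRel :
    (fun x y : EinsteinCylinder n => ∃ k : ℤ, y = einsteinShift n k x) =
      AddAction.orbitRel ℤ (EinsteinCylinder n) := by
  ext x y
  rw [AddAction.orbitRel_apply, AddAction.mem_orbit_symm]
  exact exists_congr fun _ => eq_comm

end EinsteinShift

theorem stmt_5_general (n : ℕ) :
    (∀ x : Metric.sphere (0 : EuclideanSpace ℝ (Fin (n + 1))) 1 × ℝ,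
        einsteinShift n 0 x = x) ∧
    (∀ (k l : ℤ) (x : Metric.sphere (0 : EuclideanSpace ℝ (Fin (n + 1))) 1 × ℝ),
        einsteinShift n (k + l) x = einsteinShift n k (einsteinShift n l x)) ∧
    (∀ k : ℤ, IsHomeomorph (einsteinShift n k)) ∧
    CompactSpace
      (Quot fun x y : Metric.sphere (0 : EuclideanSpace ℝ (Fin (n + 1))) 1 × ℝ =>
        ∃ k : ℤ, y = einsteinShift n k x) ∧
    T2Space
      (Quot fun x y : Metric.sphere (0 : EuclideanSpace ℝ (Fin (n + 1))) 1 × ℝ =>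
        ∃ k : ℤ, y = einsteinShift n k x) := by
  refine ⟨einsteinShift_zero, einsteinShift_add, isHomeomorph_vadd, ?_, ?_⟩ <;>
    rw [einsteinShift_rel_eq_orbitRel]
  · exact inferInstanceAs (CompactSpace (Quotient (AddAction.orbitRel ℤ (EinsteinCylinder n))))
  · exact inferInstanceAs (T2Space (Quotient (AddAction.orbitRel ℤ (EinsteinCylinder n))))

/-- For `n ≥ 1`, the maps `k • (p, t) = ((-1)^k • p, t + k·π)` define an action
of `ℤ` on `S^n × ℝ` by homeomorphisms, and the quotient space `(S^n × ℝ) / ℤ` with the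
quotient topology is a compact Hausdorff topological space. -/
theorem stmt_5 (n : ℕ) (hn : 1 ≤ n) :
    (∀ x : Metric.sphere (0 : EuclideanSpace ℝ (Fin (n + 1))) 1 × ℝ,
        einsteinShift n 0 x = x) ∧
    (∀ (k l : ℤ) (x : Metric.sphere (0 : EuclideanSpace ℝ (Fin (n + 1))) 1 × ℝ),
        einsteinShift n (k + l) x = einsteinShift n k (einsteinShift n l x)) ∧
    (∀ k : ℤ, IsHomeomorph (einsteinShift n k)) ∧
    CompactSpace
      (Quot fun x y : Metric.sphere (0 : EuclideanSpace ℝ (Fin (n + 1))) 1 × ℝ =>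
        ∃ k : ℤ, y = einsteinShift n k x) ∧
    T2Space
      (Quot fun x y : Metric.sphere (0 : EuclideanSpace ℝ (Fin (n + 1))) 1 × ℝ =>
        ∃ k : ℤ, y = einsteinShift n k x) :=
  stmt_5_general n
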